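/- arXiv:2307.07611 — 2 statements merged into one kernel-verified Lean document; each statement's English description precedes it below -/
import Mathlib

section
/- Let A be an n×n matrix over a field written as A = M + N, where M is an invertible (lower or upper) triangular matrix. Define recursively M_0 + N_0 = A (with M_0 = M, N_0 = N), and for i ≥ 0, M_{i+1} + N_{i+1} = I + M_i^{-1} N_i, where each M_i is the triangular part of the indicated matrix and is assumed invertible. Then for every p ≥ 0, A = (∏_{i=0}^{p} M_i) · (I + M_p^{-1} N_p). -/
/-! Writing `C i = 1 + M_i⁻¹ N_i`, invertibility of `M i` gives `M i * C i = M i + N i`, and the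
recursion says `M (i+1) + N (i+1) = C i`; hence `M (i+1) * C (i+1) = C i`, and the product
telescopes down to `M 0 * C 0 = M 0 + N 0 = A`. -/

theorem List.prod_map_range_succ_mul_eq {α : Type*} [Monoid α] (M C : ℕ → α)
    (hstep : ∀ i, M (i + 1) * C (i + 1) = C i) (p : ℕ) :
    ((List.range (p + 1)).map M).prod * C p = M 0 * C 0 := by
  induction p with
  | zero => simp
  | succ p ih => rw [List.prod_range_succ, mul_assoc, hstep, ih]

theorem Matrix.mul_one_add_nonsing_inv_mul {m R : Type*} [Fintype m] [DecidableEq m] [CommRing R]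
    {M : Matrix m m R} (hM : IsUnit M) (N : Matrix m m R) : M * (1 + M⁻¹ * N) = M + N := by
  rw [mul_add, mul_one,
    Matrix.mul_nonsing_inv_cancel_left _ _ ((Matrix.isUnit_iff_isUnit_det M).mp hM)]

theorem recursive_split_factorization {n : ℕ} {F : Type*} [Field F]
    (A : Matrix (Fin n) (Fin n) F)
    (M N : ℕ → Matrix (Fin n) (Fin n) F)
    (hsplit0 : M 0 + N 0 = A)
    (hMinv : ∀ i, IsUnit (M i))
    (hrec : ∀ i, M (i + 1) + N (i + 1) = 1 + (M i)⁻¹ * N i) :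
    ∀ p : ℕ, A = (((List.range (p + 1)).map M).prod) * (1 + (M p)⁻¹ * N p) := by
  have hstep (i : ℕ) :
      M (i + 1) * (1 + (M (i + 1))⁻¹ * N (i + 1)) = 1 + (M i)⁻¹ * N i := by
    rw [Matrix.mul_one_add_nonsing_inv_mul (hMinv _), hrec]
  intro p
  rw [List.prod_map_range_succ_mul_eq M (fun i => 1 + (M i)⁻¹ * N i) hstep,
    Matrix.mul_one_add_nonsing_inv_mul (hMinv 0), hsplit0]
end

section
/- Let A be an n×n invertible matrix over a field with A = M + N where M is invertible. With the recursive split M_{i+1} + N_{i+1} = I + M_i^{-1} N_i for i ≥ 0 (M_0 = M, N_0 = N, all M_i invertible), for every p ≥ 0 the inverse of A satisfies A^{-1} = (I + M_p^{-1} N_p)^{-1} · (∏_{i=0}^{p} M_i^{-1}) with the product taken in reversed order, i.e., A^{-1} = (I + M_p^{-1} N_p)^{-1} · M_p^{-1} · ... · M_1^{-1} · M_0^{-1}. -/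
/-!
Multiplying the split `M₀ + N₀ = A` on the left by `M₀⁻¹` gives `I + M₀⁻¹ N₀ = M₁ + N₁`, and
repeating this telescopes to `M_p⁻¹ ⋯ M₀⁻¹ A = I + M_p⁻¹ N_p`. Inverting both sides gives the
formula, since the product of the `M_i⁻¹` is invertible.
-/

theorem List.prod_reverse_map_range_mul_eq_one_add {R : Type*} [Ring R] (L M N : ℕ → R)
    (hL : ∀ i, L i * M i = 1) (hrec : ∀ i, M (i + 1) + N (i + 1) = 1 + L i * N i) (p : ℕ) :
    ((List.range (p + 1)).reverse.map L).prod * (M 0 + N 0) = 1 + L p * N p := by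
  induction p with
  | zero => simp [mul_add, hL 0]
  | succ p ih =>
    rw [List.range_succ, List.reverse_append, List.reverse_singleton, List.singleton_append,
      List.map_cons, List.prod_cons, mul_assoc, ih, ← hrec p, mul_add, hL (p + 1)]

theorem recursive_split_inverse_general {n : ℕ} {F : Type*} [Field F]
    (A : Matrix (Fin n) (Fin n) F)
    (M N : ℕ → Matrix (Fin n) (Fin n) F)
    (hsplit0 : M 0 + N 0 = A)
    (hMinv : ∀ i, IsUnit (M i))
    (hrec : ∀ i, M (i + 1) + N (i + 1) = 1 + (M i)⁻¹ * N i) :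
    ∀ p : ℕ, A⁻¹ =
      (1 + (M p)⁻¹ * N p)⁻¹ *
        (((List.range (p + 1)).reverse.map (fun i => (M i)⁻¹)).prod) := by
  intro p
  set P := ((List.range (p + 1)).reverse.map (fun i => (M i)⁻¹)).prod
  have hP : IsUnit P := List.prod_isUnit fun _ hu => by
    obtain ⟨i, -, rfl⟩ := List.mem_map.mp hu
    exact Matrix.isUnit_nonsing_inv_iff.mpr (hMinv i)
  have htelescope : P * A = 1 + (M p)⁻¹ * N p :=
    hsplit0 ▸ List.prod_reverse_map_range_mul_eq_one_add _ M N
      (fun i => Matrix.nonsing_inv_mul _ ((M i).isUnit_iff_isUnit_det.mp (hMinv i))) hrec p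
  rw [← htelescope, Matrix.mul_inv_rev,
    Matrix.nonsing_inv_mul_cancel_right P A⁻¹ (P.isUnit_iff_isUnit_det.mp hP)]

theorem recursive_split_inverse {n : ℕ} {F : Type*} [Field F]
    (A : Matrix (Fin n) (Fin n) F) (hA : IsUnit A)
    (M N : ℕ → Matrix (Fin n) (Fin n) F)
    (hsplit0 : M 0 + N 0 = A)
    (hMinv : ∀ i, IsUnit (M i))
    (hrec : ∀ i, M (i + 1) + N (i + 1) = 1 + (M i)⁻¹ * N i) :
    ∀ p : ℕ, A⁻¹ =
      (1 + (M p)⁻¹ * N p)⁻¹ *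
        (((List.range (p + 1)).reverse.map (fun i => (M i)⁻¹)).prod) :=
  recursive_split_inverse_general A M N hsplit0 hMinv hrec
end
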